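/- arXiv:1909.06633 — 4 statements merged into one kernel-verified Lean document; each statement's English description precedes it below -/
import Mathlib

section
/- Assume 1/2 ≤ ν < 1. Then for every admissible control a of agent i, the reduced two-lock payoff against a silent opponent satisfies Fⁱ(a, 0) ≤ 0, with equality for a ≡ 0; symmetrically Fʲ(b, 0) ≤ 0 for every admissible b with equality at b ≡ 0. Consequently both agents remaining silent, (a,b) = (0,0), is a Nash equilibrium of the reduced two-lock game. (Claim stated in the paper's two-lock section for ν ≥ 1/2.) -/
open MeasureTheory Real Set

/-- Cumulative rate `A(t) = ∫₀ᵗ a(s) ds` of a control `a`. -/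
noncomputable def cum (a : ℝ → ℝ) (t : ℝ) : ℝ := ∫ s in (0:ℝ)..t, a s

/-- Reduced two-lock payoff of an agent with own rate bound `βown`:
`F(a,b) = ∫₀ᵀ [(1−ν)(1−e^{−βown(T−τ)}) e^{−B(τ)} − ν A(τ)] e^{−A(τ)} a(τ) dτ
          − ν A(T) e^{−A(T)}`. -/
noncomputable def twoLockPayoff (T ν βown : ℝ) (a b : ℝ → ℝ) : ℝ :=
  (∫ τ in (0:ℝ)..T,
      ((1 - ν) * (1 - Real.exp (-(βown * (T - τ)))) * Real.exp (-(cum b τ))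
          - ν * cum a τ) * Real.exp (-(cum a τ)) * a τ)
    - ν * cum a T * Real.exp (-(cum a T))

/-- Time-threshold control `Γ_β(ψ)(t) = β · 𝟙_{[0,ψ]}(t)`. -/
noncomputable def threshold (β ψ : ℝ) : ℝ → ℝ :=
  fun t => if t ∈ Set.Icc (0:ℝ) ψ then β else 0

/- ------------------------------------------------------------------ -/
/- Auxiliary lemmas -/

private lemma cum_hasDerivAt {g : ℝ → ℝ} (hg : Continuous g) (t : ℝ) :
    HasDerivAt (cum g) (g t) t :=
  intervalIntegral.integral_hasDerivAt_right (hg.intervalIntegrable _ _)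
    (hg.stronglyMeasurableAtFilter _ _) hg.continuousAt

private lemma cum_continuous {g : ℝ → ℝ} (hg : Continuous g) : Continuous (cum g) :=
  continuous_iff_continuousAt.2 fun t => (cum_hasDerivAt hg t).continuousAt

/-- Substitution formula for continuous integrands. -/
private lemma subst_cont (φ g : ℝ → ℝ) (hφ : Continuous φ) (hg : Continuous g) (T : ℝ) :
    ∫ τ in (0:ℝ)..T, φ (cum g τ) * g τ = ∫ u in (0:ℝ)..(cum g T), φ u := by
  have hΦ : ∀ x : ℝ, HasDerivAt (fun y => ∫ u in (0:ℝ)..y, φ u) (φ x) x := fun x =>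
    intervalIntegral.integral_hasDerivAt_right (hφ.intervalIntegrable _ _)
      (hφ.stronglyMeasurableAtFilter _ _) hφ.continuousAt
  have hcomp : ∀ t ∈ Set.uIcc (0:ℝ) T,
      HasDerivAt (fun t => ∫ u in (0:ℝ)..(cum g t), φ u) (φ (cum g t) * g t) t := fun t _ =>
    (hΦ (cum g t)).comp t (cum_hasDerivAt hg t)
  have hint : IntervalIntegrable (fun τ => φ (cum g τ) * g τ) volume 0 T :=
    ((hφ.comp (cum_continuous hg)).mul hg).intervalIntegrable _ _
  rw [intervalIntegral.integral_eq_sub_of_hasDerivAt hcomp hint]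
  simp [cum]

private lemma cum_abs_le {g : ℝ → ℝ} (hg : Integrable g) {τ : ℝ} (hτ : 0 ≤ τ) :
    |cum g τ| ≤ ∫ x, |g x| := by
  refine (intervalIntegral.abs_integral_le_integral_abs hτ).trans ?_
  rw [intervalIntegral.integral_of_le hτ]
  exact setIntegral_le_integral hg.abs (Filter.Eventually.of_forall fun x => abs_nonneg _)

/-- Substitution formula for integrable controls, by approximation with
continuous compactly supported functions. -/
private lemma subst_integrable {a : ℝ → ℝ} (ha : Integrable a) {T : ℝ} (hT : 0 ≤ T)
    {φ : ℝ → ℝ} (hφ : Continuous φ) :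
    ∫ τ in (0:ℝ)..T, φ (cum a τ) * a τ = ∫ u in (0:ℝ)..(cum a T), φ u := by
  set I := ∫ x, |a x| with hIdef
  have hI0 : 0 ≤ I := integral_nonneg fun x => abs_nonneg _
  set R := I + 1 with hRdef
  set K := Set.Icc (-R) R with hKdef
  obtain ⟨M₀, hM₀⟩ := (isCompact_Icc (a := -R) (b := R)).exists_bound_of_continuousOn
    hφ.continuousOn
  set M := max M₀ 0 with hMdef
  have hMnn : (0:ℝ) ≤ M := le_max_right _ _
  have hMb : ∀ x ∈ K, |φ x| ≤ M := fun x hx =>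
    (Real.norm_eq_abs (φ x) ▸ hM₀ x hx).trans (le_max_left _ _)
  have hcuma : Continuous (cum a) := by
    unfold cum; exact ha.continuous_primitive 0
  apply eq_of_forall_dist_le
  intro ε hε
  have hUC := (isCompact_Icc (a := -R) (b := R)).uniformContinuousOn_of_continuous
    hφ.continuousOn
  set ε₁ := ε / (3 * (I + 1)) with hε₁def
  have hε₁ : 0 < ε₁ := by positivity
  obtain ⟨δ, hδ, hδ'⟩ := Metric.uniformContinuousOn_iff.1 hUC ε₁ hε₁
  set η := min (δ / 2) (min 1 (ε / (3 * (M + 1)))) with hηdef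
  have hη : 0 < η := lt_min (by positivity) (lt_min one_pos (by positivity))
  have hη1 : η ≤ 1 := (min_le_right _ _).trans (min_le_left _ _)
  have hηδ : η < δ := lt_of_le_of_lt (min_le_left _ _) (half_lt_self hδ)
  have hηε : η ≤ ε / (3 * (M + 1)) := (min_le_right _ _).trans (min_le_right _ _)
  obtain ⟨g, -, hgapp, hgc, hgi⟩ := ha.exists_hasCompactSupport_integral_sub_le hη
  have hgapp' : ∫ x, |a x - g x| ≤ η := by simpa [Real.norm_eq_abs] using hgapp
  -- basic estimates
  have hdiff : ∀ τ : ℝ, 0 ≤ τ → |cum a τ - cum g τ| ≤ η := by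
    intro τ hτ
    have he : cum a τ - cum g τ = cum (fun x => a x - g x) τ := by
      unfold cum
      rw [intervalIntegral.integral_sub (ha.intervalIntegrable)
        (hgi.intervalIntegrable)]
    rw [he]
    exact (cum_abs_le (ha.sub hgi) hτ).trans hgapp'
  have hKa : ∀ τ : ℝ, 0 ≤ τ → cum a τ ∈ K := by
    intro τ hτ
    have h := abs_le.1 (cum_abs_le ha hτ)
    exact ⟨by simp only [hRdef]; linarith [h.1], by simp only [hRdef]; linarith [h.2]⟩
  have hKg : ∀ τ : ℝ, 0 ≤ τ → cum g τ ∈ K := by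
    intro τ hτ
    have h1 := abs_le.1 (hdiff τ hτ)
    have h2 := abs_le.1 (cum_abs_le ha hτ)
    exact ⟨by simp only [hRdef]; linarith [h1.1, h2.1], by
      simp only [hRdef]; linarith [h1.2, h2.2]⟩
  have hφdiff : ∀ τ ∈ Set.Icc (0:ℝ) T, |φ (cum a τ) - φ (cum g τ)| ≤ ε₁ := by
    intro τ hτ
    have hd : dist (cum a τ) (cum g τ) < δ := by
      rw [Real.dist_eq]; exact lt_of_le_of_lt (hdiff τ hτ.1) hηδ
    have := hδ' (cum a τ) (hKa τ hτ.1) (cum g τ) (hKg τ hτ.1) hd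
    rw [Real.dist_eq] at this
    exact this.le
  -- integrability
  have iA : IntervalIntegrable a volume 0 T := ha.intervalIntegrable
  have iG : IntervalIntegrable g volume 0 T := hgi.intervalIntegrable
  have i1 : IntervalIntegrable (fun τ => φ (cum a τ) * a τ) volume 0 T :=
    iA.continuousOn_mul (hφ.comp hcuma).continuousOn
  have i2 : IntervalIntegrable (fun τ => φ (cum g τ) * g τ) volume 0 T :=
    iG.continuousOn_mul (hφ.comp (cum_continuous hgc)).continuousOn
  -- decomposition
  have key : (∫ τ in (0:ℝ)..T, φ (cum a τ) * a τ) - ∫ u in (0:ℝ)..(cum a T), φ u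
      = (∫ τ in (0:ℝ)..T, (φ (cum a τ) * a τ - φ (cum g τ) * g τ))
        + ((∫ u in (0:ℝ)..(cum g T), φ u) - ∫ u in (0:ℝ)..(cum a T), φ u) := by
    rw [intervalIntegral.integral_sub i1 i2, ← subst_cont φ g hφ hgc T]
    ring
  -- first term bound
  have b1 : |∫ τ in (0:ℝ)..T, (φ (cum a τ) * a τ - φ (cum g τ) * g τ)| ≤ ε₁ * I + M * η := by
    have ir : IntervalIntegrable (fun τ => ε₁ * |a τ| + M * |a τ - g τ|) volume 0 T :=
      (iA.abs.const_mul ε₁).add ((iA.sub iG).abs.const_mul M)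
    calc |∫ τ in (0:ℝ)..T, (φ (cum a τ) * a τ - φ (cum g τ) * g τ)|
        ≤ ∫ τ in (0:ℝ)..T, |φ (cum a τ) * a τ - φ (cum g τ) * g τ| :=
          intervalIntegral.abs_integral_le_integral_abs hT
      _ ≤ ∫ τ in (0:ℝ)..T, (ε₁ * |a τ| + M * |a τ - g τ|) := by
          refine intervalIntegral.integral_mono_on hT (i1.sub i2).abs ir ?_
          intro τ hτ
          have h1 := hφdiff τ hτ
          have h2 := hMb (cum g τ) (hKg τ hτ.1)
          have he : φ (cum a τ) * a τ - φ (cum g τ) * g τ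
              = (φ (cum a τ) - φ (cum g τ)) * a τ + φ (cum g τ) * (a τ - g τ) := by ring
          rw [he]
          refine (abs_add_le _ _).trans ?_
          rw [abs_mul, abs_mul]
          exact add_le_add (mul_le_mul_of_nonneg_right h1 (abs_nonneg _))
            (mul_le_mul_of_nonneg_right h2 (abs_nonneg _))
      _ = ε₁ * (∫ τ in (0:ℝ)..T, |a τ|) + M * ∫ τ in (0:ℝ)..T, |a τ - g τ| := by
          rw [intervalIntegral.integral_add (iA.abs.const_mul ε₁)
            ((iA.sub iG).abs.const_mul M), intervalIntegral.integral_const_mul,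
            intervalIntegral.integral_const_mul]
      _ ≤ ε₁ * I + M * η := by
          have e1 : (∫ τ in (0:ℝ)..T, |a τ|) ≤ I := by
            rw [intervalIntegral.integral_of_le hT]
            exact setIntegral_le_integral ha.abs
              (Filter.Eventually.of_forall fun x => abs_nonneg _)
          have e2 : (∫ τ in (0:ℝ)..T, |a τ - g τ|) ≤ η := by
            rw [intervalIntegral.integral_of_le hT]
            exact (setIntegral_le_integral (ha.sub hgi).abs
              (Filter.Eventually.of_forall fun x => abs_nonneg _)).trans hgapp'
          exact add_le_add (mul_le_mul_of_nonneg_left e1 hε₁.le)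
            (mul_le_mul_of_nonneg_left e2 hMnn)
  -- second term bound
  have b2 : |(∫ u in (0:ℝ)..(cum g T), φ u) - ∫ u in (0:ℝ)..(cum a T), φ u| ≤ M * η := by
    rw [intervalIntegral.integral_interval_sub_left (hφ.intervalIntegrable _ _)
      (hφ.intervalIntegrable _ _)]
    have hsub : Set.uIcc (cum a T) (cum g T) ⊆ K := by
      have hmem : ∀ x ∈ K, x ∈ Set.uIcc (-R) R := by
        intro x hx; rw [Set.uIcc_of_le (by linarith : -R ≤ R)]; exact hx
      intro x hx
      have := Set.uIcc_subset_uIcc (hmem _ (hKa T hT)) (hmem _ (hKg T hT)) hx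
      rwa [Set.uIcc_of_le (by linarith : -R ≤ R)] at this
    have hb : ∀ x ∈ Set.uIoc (cum a T) (cum g T), ‖φ x‖ ≤ M := by
      intro x hx
      rw [Real.norm_eq_abs]
      exact hMb x (hsub (Set.Ioc_subset_Icc_self hx))
    have h := intervalIntegral.norm_integral_le_of_norm_le_const hb
    rw [Real.norm_eq_abs] at h
    refine h.trans ?_
    have : |cum g T - cum a T| ≤ η := by rw [abs_sub_comm]; exact hdiff T hT
    exact mul_le_mul_of_nonneg_left this hMnn
  -- conclude
  rw [Real.dist_eq, key]
  have h1 : ε₁ * I ≤ ε / 3 := by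
    rw [hε₁def, div_mul_eq_mul_div, div_le_div_iff₀ (by positivity) (by norm_num)]
    nlinarith
  have h3 : M * η ≤ ε / 3 := by
    have : M * η ≤ M * (ε / (3 * (M + 1))) := mul_le_mul_of_nonneg_left hηε hMnn
    refine this.trans ?_
    rw [mul_div_assoc', div_le_div_iff₀ (by positivity) (by norm_num)]
    nlinarith
  calc |(∫ τ in (0:ℝ)..T, (φ (cum a τ) * a τ - φ (cum g τ) * g τ))
        + ((∫ u in (0:ℝ)..(cum g T), φ u) - ∫ u in (0:ℝ)..(cum a T), φ u)|
      ≤ |∫ τ in (0:ℝ)..T, (φ (cum a τ) * a τ - φ (cum g τ) * g τ)|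
        + |(∫ u in (0:ℝ)..(cum g T), φ u) - ∫ u in (0:ℝ)..(cum a T), φ u| := abs_add_le _ _
    _ ≤ (ε₁ * I + M * η) + M * η := add_le_add b1 b2
    _ ≤ ε := by linarith

/-- Explicit antiderivative: `∫₀ˣ ν(1−u)e^{−u} du = ν x e^{−x}`. -/
private lemma Phi_eval (ν x : ℝ) :
    ∫ u in (0:ℝ)..x, ν * (1 - u) * Real.exp (-u) = ν * x * Real.exp (-x) := by
  have h : ∀ u : ℝ, HasDerivAt (fun y => ν * y * Real.exp (-y))
      (ν * (1 - u) * Real.exp (-u)) u := by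
    intro u
    have h1 : HasDerivAt (fun y : ℝ => Real.exp (-y)) (-Real.exp (-u)) u := by
      simpa [Function.comp_def] using (Real.hasDerivAt_exp (-u)).comp u (hasDerivAt_neg u)
    have h2 : HasDerivAt (fun y : ℝ => ν * y) ν u := by
      simpa using (hasDerivAt_id u).const_mul ν
    have : HasDerivAt (fun y => ν * y * Real.exp (-y))
        (ν * Real.exp (-u) + ν * u * -Real.exp (-u)) u := h2.mul h1
    convert this using 1
    ring
  rw [intervalIntegral.integral_eq_sub_of_hasDerivAt (fun u _ => h u)
    (Continuous.intervalIntegrable (by continuity) _ _)]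
  simp

private lemma payoff_zero (T ν β : ℝ) :
    twoLockPayoff T ν β (fun _ => 0) (fun _ => 0) = 0 := by
  simp [twoLockPayoff, cum]

/-- The central inequality: against a silent opponent, any admissible control
yields nonpositive reduced two-lock payoff when `ν ≥ 1/2`. -/
private lemma payoff_nonpos {T ν β : ℝ} (hT : 0 < T) (hν0 : 1/2 ≤ ν) (hν1 : ν < 1)
    (hβ : 0 < β) (a : ℝ → ℝ) (ha : Measurable a)
    (hab : ∀ t ∈ Set.Icc (0:ℝ) T, a t ∈ Set.Icc (0:ℝ) β) :
    twoLockPayoff T ν β a (fun _ => 0) ≤ 0 := by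
  have hT0 : (0:ℝ) ≤ T := hT.le
  set aa : ℝ → ℝ := (Set.Icc (0:ℝ) T).indicator a with haadef
  have hia : IntegrableOn a (Set.Icc (0:ℝ) T) := by
    refine Integrable.mono' (g := fun _ : ℝ => β) (integrableOn_const measure_Icc_lt_top.ne)
      ha.aestronglyMeasurable.restrict ?_
    filter_upwards [ae_restrict_mem measurableSet_Icc] with t ht
    rw [Real.norm_eq_abs, abs_le]
    exact ⟨by linarith [(hab t ht).1], (hab t ht).2⟩
  have hiaa : Integrable aa := hia.integrable_indicator measurableSet_Icc
  have heq : ∀ τ ∈ Set.Icc (0:ℝ) T, cum aa τ = cum a τ := by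
    intro τ hτ
    apply intervalIntegral.integral_congr
    intro s hs
    rw [Set.uIcc_of_le hτ.1] at hs
    have hsT : s ∈ Set.Icc (0:ℝ) T := ⟨hs.1, hs.2.trans hτ.2⟩
    exact Set.indicator_of_mem hsT a
  have haann : ∀ t, 0 ≤ aa t := by
    intro t
    rw [haadef]
    by_cases h : t ∈ Set.Icc (0:ℝ) T
    · rw [Set.indicator_of_mem h]; exact (hab t h).1
    · rw [Set.indicator_of_notMem h]
  have hTmem : T ∈ Set.Icc (0:ℝ) T := ⟨hT0, le_rfl⟩
  have hcumT : cum a T = cum aa T := (heq T hTmem).symm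
  simp only [twoLockPayoff]
  have hintcongr : (∫ τ in (0:ℝ)..T,
        ((1 - ν) * (1 - Real.exp (-(β * (T - τ)))) * Real.exp (-(cum (fun _ => (0:ℝ)) τ))
          - ν * cum a τ) * Real.exp (-(cum a τ)) * a τ)
      = ∫ τ in (0:ℝ)..T,
        ((1 - ν) * (1 - Real.exp (-(β * (T - τ)))) * Real.exp (-(cum (fun _ => (0:ℝ)) τ))
          - ν * cum aa τ) * Real.exp (-(cum aa τ)) * aa τ := by
    apply intervalIntegral.integral_congr
    intro τ hτ
    rw [Set.uIcc_of_le hT0] at hτ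
    beta_reduce
    rw [← heq τ hτ, haadef, Set.indicator_of_mem hτ]
  rw [hintcongr, hcumT]
  set φ : ℝ → ℝ := fun u => ν * (1 - u) * Real.exp (-u) with hφdef
  have hφc : Continuous φ := by
    rw [hφdef]; continuity
  have hcA : Continuous (cum aa) := by
    unfold cum; exact hiaa.continuous_primitive 0
  have hsubst : ∫ τ in (0:ℝ)..T, φ (cum aa τ) * aa τ
      = ν * cum aa T * Real.exp (-(cum aa T)) := by
    rw [subst_integrable hiaa hT0 hφc]
    simpa using Phi_eval ν (cum aa T)
  have hmono : (∫ τ in (0:ℝ)..T,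
        ((1 - ν) * (1 - Real.exp (-(β * (T - τ)))) * Real.exp (-(cum (fun _ => (0:ℝ)) τ))
          - ν * cum aa τ) * Real.exp (-(cum aa τ)) * aa τ)
      ≤ ∫ τ in (0:ℝ)..T, φ (cum aa τ) * aa τ := by
    have hc1 : Continuous fun τ =>
        ((1 - ν) * (1 - Real.exp (-(β * (T - τ)))) * Real.exp (-(cum (fun _ => (0:ℝ)) τ))
          - ν * cum aa τ) * Real.exp (-(cum aa τ)) := by
      have h0 : Continuous (cum (fun _ : ℝ => (0:ℝ))) := cum_continuous continuous_const
      fun_prop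
    refine intervalIntegral.integral_mono_on hT0
      ((hiaa.intervalIntegrable).continuousOn_mul hc1.continuousOn)
      ((hiaa.intervalIntegrable).continuousOn_mul (hφc.comp hcA).continuousOn) ?_
    intro τ hτ
    have h0 : cum (fun _ : ℝ => (0:ℝ)) τ = 0 := by simp [cum]
    rw [h0, neg_zero, Real.exp_zero, mul_one]
    have haτ : 0 ≤ aa τ := haann τ
    have hexp : (0:ℝ) < Real.exp (-(cum aa τ)) := Real.exp_pos _
    have hE : Real.exp (-(β * (T - τ))) ≤ 1 := by
      have : (-(β * (T - τ))) ≤ 0 := by nlinarith [hτ.1, hτ.2]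
      simpa using Real.exp_le_exp.2 this
    have hE0 : (0:ℝ) < Real.exp (-(β * (T - τ))) := Real.exp_pos _
    have hcoef : (1 - ν) * (1 - Real.exp (-(β * (T - τ)))) - ν * cum aa τ
        ≤ ν * (1 - cum aa τ) := by nlinarith
    show ((1 - ν) * (1 - Real.exp (-(β * (T - τ)))) - ν * cum aa τ)
        * Real.exp (-(cum aa τ)) * aa τ
      ≤ ν * (1 - cum aa τ) * Real.exp (-(cum aa τ)) * aa τ
    exact mul_le_mul_of_nonneg_right
      (mul_le_mul_of_nonneg_right hcoef hexp.le) haτ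
  have := hmono.trans_eq hsubst
  linarith

/-- Claim from the paper's two-lock section for `ν ≥ 1/2`: against a silent
opponent every admissible control gives nonpositive reduced two-lock payoff,
with equality for the zero control (for both agents); consequently both agents
remaining silent is a Nash equilibrium of the reduced two-lock game. -/
theorem two_lock_silence_NE_nu_ge_half
    (T ν βi βj : ℝ) (hT : 0 < T) (hν0 : 1/2 ≤ ν) (hν1 : ν < 1)
    (hβi : 0 < βi) (hβj : 0 < βj) :
    (∀ a : ℝ → ℝ, Measurable a → (∀ t ∈ Icc (0:ℝ) T, a t ∈ Icc (0:ℝ) βi) →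
        twoLockPayoff T ν βi a (fun _ => 0) ≤ 0) ∧
    twoLockPayoff T ν βi (fun _ => 0) (fun _ => 0) = 0 ∧
    (∀ b : ℝ → ℝ, Measurable b → (∀ t ∈ Icc (0:ℝ) T, b t ∈ Icc (0:ℝ) βj) →
        twoLockPayoff T ν βj b (fun _ => 0) ≤ 0) ∧
    twoLockPayoff T ν βj (fun _ => 0) (fun _ => 0) = 0 ∧
    -- Nash equilibrium of the reduced two-lock game at `(0,0)`
    (∀ a : ℝ → ℝ, Measurable a → (∀ t ∈ Icc (0:ℝ) T, a t ∈ Icc (0:ℝ) βi) →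
        twoLockPayoff T ν βi a (fun _ => 0)
          ≤ twoLockPayoff T ν βi (fun _ => 0) (fun _ => 0)) ∧
    (∀ b : ℝ → ℝ, Measurable b → (∀ t ∈ Icc (0:ℝ) T, b t ∈ Icc (0:ℝ) βj) →
        twoLockPayoff T ν βj b (fun _ => 0)
          ≤ twoLockPayoff T ν βj (fun _ => 0) (fun _ => 0)) := by
  refine ⟨fun a ha hab => payoff_nonpos hT hν0 hν1 hβi a ha hab,
    payoff_zero T ν βi,
    fun b hb hbb => payoff_nonpos hT hν0 hν1 hβj b hb hbb,
    payoff_zero T ν βj,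
    fun a ha hab => ?_, fun b hb hbb => ?_⟩
  · rw [payoff_zero T ν βi]; exact payoff_nonpos hT hν0 hν1 hβi a ha hab
  · rw [payoff_zero T ν βj]; exact payoff_nonpos hT hν0 hν1 hβj b hb hbb
end

section
/- Assume 0 < ν < 1/2, βʲ ≥ βⁱ > 0 and e^{−βʲT} > (1−2ν)/(1−ν). Then both agents remaining silent, (a,b) = (0,0), is a Nash equilibrium of the reduced two-lock game: Fⁱ(a, 0) ≤ 0 = Fⁱ(0,0) for every admissible control a of agent i, and Fʲ(b, 0) ≤ 0 = Fʲ(0,0) for every admissible control b of agent j. (Paper's Theorem 4, first case.) -/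
/-!
Against a silent opponent the gain from a first contact at time `τ`,
`(1 - ν)(1 - e^{-β(T - τ)})`, is at most `κ = (1 - ν)(1 - e^{-βT}) ≤ ν`. Replacing it by `κ` and
substituting `u = A(τ)` bounds the payoff by
`∫₀^{A(T)} (κ - νu) e^{-u} du - ν A(T) e^{-A(T)} = (ν - κ)(e^{-A(T)} - 1) ≤ 0`.
The substitution is valid for merely measurable controls because `A` is Lipschitz, so its
composition with a `C¹` function is absolutely continuous.
-/

open MeasureTheory Real Set

theorem lipschitzOnWith_integral_of_norm_le {f : ℝ → ℝ} {a b C : ℝ}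
    (hf : IntervalIntegrable f volume a b) (hC : ∀ x ∈ uIcc a b, ‖f x‖ ≤ C) :
    LipschitzOnWith C.toNNReal (fun x => ∫ t in a..x, f t) (uIcc a b) := by
  refine LipschitzOnWith.of_dist_le' fun x hx y hy => ?_
  have hx' : IntervalIntegrable f volume a x := hf.mono_set (uIcc_subset_uIcc_left hx)
  have hy' : IntervalIntegrable f volume a y := hf.mono_set (uIcc_subset_uIcc_left hy)
  rw [Real.dist_eq, intervalIntegral.integral_interval_sub_left hx' hy', Real.dist_eq]
  simpa only [← Real.norm_eq_abs] using intervalIntegral.norm_integral_le_of_norm_le_const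
    fun t ht => hC t (uIcc_subset_uIcc hy hx (uIoc_subset_uIcc ht))

theorem integral_deriv_comp_integral_mul {f G : ℝ → ℝ} {a b C : ℝ}
    (hf : IntervalIntegrable f volume a b) (hC : ∀ x ∈ uIcc a b, ‖f x‖ ≤ C)
    (hG : ContDiff ℝ 1 G) :
    ∫ x in a..b, deriv G (∫ t in a..x, f t) * f x = G (∫ t in a..b, f t) - G 0 := by
  set F := fun x => ∫ t in a..x, f t
  have hF := lipschitzOnWith_integral_of_norm_le hf hC
  obtain ⟨K, hGK⟩ := hG.locallyLipschitz.locallyLipschitzOn.exists_lipschitzOnWith_of_compact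
    (isCompact_uIcc.image_of_continuousOn hF.continuousOn)
  have hGF : AbsolutelyContinuousOnInterval (G ∘ F) a b :=
    (hGK.comp hF (mapsTo_image F _)).absolutelyContinuousOnInterval
  have hFa : F a = 0 := intervalIntegral.integral_same
  rw [← hFa, ← Function.comp_apply (f := G) (g := F), ← Function.comp_apply (f := G) (g := F),
    ← hGF.integral_deriv_eq_sub]
  refine intervalIntegral.integral_congr_ae ?_
  filter_upwards [hf.ae_hasDerivAt_integral] with x hx hxab
  have hFx := hx (uIoc_subset_uIcc hxab) a left_mem_uIcc
  exact ((hG.differentiable one_ne_zero (F x)).hasDerivAt.comp x hFx).deriv.symm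

theorem Measurable.intervalIntegrable_of_norm_le {f : ℝ → ℝ} {a b C : ℝ} (hf : Measurable f)
    (hC : ∀ x ∈ uIcc a b, ‖f x‖ ≤ C) : IntervalIntegrable f volume a b := by
  refine (intervalIntegrable_const (c := C)).mono_fun hf.aestronglyMeasurable ?_
  filter_upwards [ae_restrict_mem measurableSet_uIoc] with x hx
  exact (hC x (uIoc_subset_uIcc hx)).trans (le_abs_self C)

theorem integral_sub_mul_exp_neg_cum {a : ℝ → ℝ} {T β : ℝ} (κ ν : ℝ)
    (ha : IntervalIntegrable a volume 0 T) (haβ : ∀ t ∈ uIcc 0 T, ‖a t‖ ≤ β) :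
    ∫ τ in (0:ℝ)..T, (κ - ν * cum a τ) * exp (-cum a τ) * a τ
      = (ν * cum a T + (ν - κ)) * exp (-cum a T) - (ν - κ) := by
  set G : ℝ → ℝ := fun u => (ν * u + (ν - κ)) * exp (-u)
  have hG_deriv : ∀ u, HasDerivAt G ((κ - ν * u) * exp (-u)) u := fun u =>
    ((((hasDerivAt_id' u).const_mul ν).add_const (ν - κ)).mul (hasDerivAt_neg u).exp).congr_deriv
      (by ring)
  have hG : ContDiff ℝ 1 G := by fun_prop
  have := integral_deriv_comp_integral_mul ha haβ hG
  rw [funext fun u => (hG_deriv u).deriv] at this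
  simpa [G, cum] using this

theorem twoLockPayoff_silent_right_nonpos {T ν β : ℝ} {a : ℝ → ℝ} (hT : 0 ≤ T) (hν : ν ≤ 1)
    (hgain : (1 - ν) * (1 - exp (-(β * T))) ≤ ν)
    (ha : Measurable a) (haβ : ∀ t ∈ Icc 0 T, a t ∈ Icc 0 β) :
    twoLockPayoff T ν β a (fun _ => 0) ≤ 0 := by
  rw [← uIcc_of_le hT] at haβ
  have hβ : 0 ≤ β := (haβ 0 left_mem_uIcc).1.trans (haβ 0 left_mem_uIcc).2
  have ha_nonneg : ∀ t ∈ uIcc 0 T, 0 ≤ a t := fun t ht => (haβ t ht).1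
  have ha_le : ∀ t ∈ uIcc 0 T, ‖a t‖ ≤ β := fun t ht => by
    rw [Real.norm_of_nonneg (ha_nonneg t ht)]; exact (haβ t ht).2
  have ha_int := ha.intervalIntegrable_of_norm_le ha_le
  have hA_cont : ContinuousOn (cum a) (uIcc 0 T) :=
    (lipschitzOnWith_integral_of_norm_le ha_int ha_le).continuousOn
  set κ := (1 - ν) * (1 - exp (-(β * T)))
  set X := cum a T
  have hX : 0 ≤ X :=
    intervalIntegral.integral_nonneg hT fun t ht => ha_nonneg t (uIcc_of_le hT ▸ ht)
  have hgain_le : ∀ τ ∈ Icc 0 T, (1 - ν) * (1 - exp (-(β * (T - τ)))) ≤ κ := fun τ hτ => by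
    have : exp (-(β * T)) ≤ exp (-(β * (T - τ))) := by gcongr; nlinarith [hτ.1]
    unfold κ; nlinarith
  have hsilent : cum (fun _ => 0) = fun _ => 0 := funext fun τ => by simp [cum]
  calc twoLockPayoff T ν β a (fun _ => 0)
      = (∫ τ in (0:ℝ)..T, ((1 - ν) * (1 - exp (-(β * (T - τ)))) - ν * cum a τ)
          * exp (-cum a τ) * a τ) - ν * X * exp (-X) := by
        simp only [twoLockPayoff, hsilent, neg_zero, exp_zero, mul_one, X]
    _ ≤ (∫ τ in (0:ℝ)..T, (κ - ν * cum a τ) * exp (-cum a τ) * a τ) - ν * X * exp (-X) := by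
        gcongr
        refine intervalIntegral.integral_mono_on hT ?_ ?_ fun τ hτ => ?_
        · exact ha_int.continuousOn_mul (by fun_prop)
        · exact ha_int.continuousOn_mul (by fun_prop)
        · have := hgain_le τ hτ
          have := ha_nonneg τ (uIcc_of_le hT ▸ hτ)
          gcongr
    _ = (ν - κ) * (exp (-X) - 1) := by
        rw [integral_sub_mul_exp_neg_cum κ ν ha_int ha_le]; ring
    _ ≤ 0 := mul_nonpos_of_nonneg_of_nonpos (by linarith) (by simpa using hX)

theorem twoLockPayoff_silent_left (T ν β : ℝ) (b : ℝ → ℝ) :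
    twoLockPayoff T ν β (fun _ => 0) b = 0 := by
  simp [twoLockPayoff, cum]

theorem two_lock_NE_both_silent_general
    (T ν βi βj : ℝ) (hT : 0 < T) (hν1 : ν < 1/2)
    (hβij : βi ≤ βj)
    (hcase : Real.exp (-(βj * T)) > (1 - 2*ν) / (1 - ν)) :
    (∀ a : ℝ → ℝ, Measurable a → (∀ t ∈ Icc (0:ℝ) T, a t ∈ Icc (0:ℝ) βi) →
        twoLockPayoff T ν βi a (fun _ => 0) ≤ 0) ∧
    twoLockPayoff T ν βi (fun _ => 0) (fun _ => 0) = 0 ∧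
    (∀ b : ℝ → ℝ, Measurable b → (∀ t ∈ Icc (0:ℝ) T, b t ∈ Icc (0:ℝ) βj) →
        twoLockPayoff T ν βj b (fun _ => 0) ≤ 0) ∧
    twoLockPayoff T ν βj (fun _ => 0) (fun _ => 0) = 0 := by
  have hν : ν ≤ 1 := by linarith
  have hgain_j : (1 - ν) * (1 - exp (-(βj * T))) ≤ ν := by
    have := (div_lt_iff₀ (by linarith : (0:ℝ) < 1 - ν)).mp hcase
    nlinarith
  have hgain_i : (1 - ν) * (1 - exp (-(βi * T))) ≤ ν := by
    have : exp (-(βj * T)) ≤ exp (-(βi * T)) := by gcongr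
    nlinarith
  exact ⟨fun a ha haβ => twoLockPayoff_silent_right_nonpos hT.le hν hgain_i ha haβ,
    twoLockPayoff_silent_left T ν βi _,
    fun b hb hbβ => twoLockPayoff_silent_right_nonpos hT.le hν hgain_j hb hbβ,
    twoLockPayoff_silent_left T ν βj _⟩

/-- Paper's Theorem 4, first case: if `0 < ν < 1/2`, `βʲ ≥ βⁱ` and
`e^{−βʲT} > (1−2ν)/(1−ν)`, then both agents remaining silent is a Nash
equilibrium of the reduced two-lock game. -/
theorem two_lock_NE_both_silent
    (T ν βi βj : ℝ) (hT : 0 < T) (hν0 : 0 < ν) (hν1 : ν < 1/2)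
    (hβi : 0 < βi) (hβij : βi ≤ βj)
    (hcase : Real.exp (-(βj * T)) > (1 - 2*ν) / (1 - ν)) :
    (∀ a : ℝ → ℝ, Measurable a → (∀ t ∈ Icc (0:ℝ) T, a t ∈ Icc (0:ℝ) βi) →
        twoLockPayoff T ν βi a (fun _ => 0) ≤ 0) ∧
    twoLockPayoff T ν βi (fun _ => 0) (fun _ => 0) = 0 ∧
    (∀ b : ℝ → ℝ, Measurable b → (∀ t ∈ Icc (0:ℝ) T, b t ∈ Icc (0:ℝ) βj) →
        twoLockPayoff T ν βj b (fun _ => 0) ≤ 0) ∧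
    twoLockPayoff T ν βj (fun _ => 0) (fun _ => 0) = 0 :=
  two_lock_NE_both_silent_general T ν βi βj hT hν1 hβij hcase
end

section
/- Assume 0 < ν < 1/2, βʲ ≥ βⁱ > 0 and e^{−βⁱT} > (1−2ν)/(1−ν) > e^{−βʲT}. Set ψ₀ = T + (1/βʲ) ln((1−2ν)/(1−ν)). Then ψ₀ ∈ (0,T), and the pair (0, Γ_{βʲ}(ψ₀)) — agent i silent, agent j playing the threshold control with threshold ψ₀ — is a Nash equilibrium of the reduced two-lock game: Fⁱ(a, Γ_{βʲ}(ψ₀)) ≤ Fⁱ(0, Γ_{βʲ}(ψ₀)) for every admissible control a of agent i, and Fʲ(b, 0) ≤ Fʲ(Γ_{βʲ}(ψ₀), 0) for every admissible control b of agent j. (Paper's Theorem 4, second case.) -/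
/-!
Against the threshold opponent, agent i's value of a first contact at time `τ`,
`(1-ν)(1-e^{-βⁱ(T-τ)}) e^{-B(τ)}`, never exceeds `(1-ν)(1-e^{-βⁱT}) < ν`, while
`ν (1-A) e^{-A} a = (ν A e^{-A})'`; so the integrand is dominated by an exact derivative and
every control earns at most `0`, the payoff of silence.

Against a silent opponent, an integration by parts writes agent j's payoff as
`∫₀ᵀ w P - ν P(T)`, where `P = 1 - e^{-B}` is the probability of contact by time `τ` and
`w = (1-ν)βʲe^{-βʲ(T-τ)}` is the decay rate of the second-stage value, whose mass on `[ψ₀, T]`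
is exactly `ν`. Since `P` is nondecreasing, contact probability gained after `ψ₀` is worth
nothing, and before `ψ₀` the probability is largest at full rate `βʲ`: the threshold control
does both.

Controls are only measurable, so the chain rule and the integration by parts are carried out
for absolutely continuous functions.
-/

open MeasureTheory Real Set

open Filter

theorem LocallyLipschitz.comp_absolutelyContinuousOnInterval {E Y : Type*}
    [SeminormedAddCommGroup E] [PseudoMetricSpace Y] {φ : E → Y} {f : ℝ → E} {a b : ℝ}
    (hφ : LocallyLipschitz φ) (hf : AbsolutelyContinuousOnInterval f a b) :
    AbsolutelyContinuousOnInterval (fun x => φ (f x)) a b := by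
  obtain ⟨K, hK⟩ := (hφ.locallyLipschitzOn (s := f '' uIcc a b)).exists_lipschitzOnWith_of_compact
      (isCompact_uIcc.image_of_continuousOn hf.continuousOn)
  unfold AbsolutelyContinuousOnInterval at hf ⊢
  have hKf := hf.const_mul (K : ℝ)
  rw [mul_zero] at hKf
  refine squeeze_zero' (Eventually.of_forall fun _ => Finset.sum_nonneg fun _ _ => dist_nonneg)
    ?_ hKf
  filter_upwards [mem_inf_of_right (mem_principal_self _)] with E hE
  rw [Finset.mul_sum]
  exact Finset.sum_le_sum fun i hi => hK.dist_le_mul _ (mem_image_of_mem f (hE.1 i hi).1) _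
    (mem_image_of_mem f (hE.1 i hi).2)

theorem AbsolutelyContinuousOnInterval.integral_eq_sub_of_ae_hasDerivAt {f f' : ℝ → ℝ} {a b : ℝ}
    (hf : AbsolutelyContinuousOnInterval f a b)
    (hf' : ∀ᵐ x, x ∈ uIcc a b → HasDerivAt f (f' x) x) :
    ∫ x in a..b, f' x = f b - f a := by
  rw [← hf.integral_deriv_eq_sub]
  refine intervalIntegral.integral_congr_ae ?_
  filter_upwards [hf'] with x hx hxab
  exact (hx (uIoc_subset_uIcc hxab)).deriv.symm

section Cumulative

variable {a : ℝ → ℝ} {T : ℝ}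

@[simp]
lemma cum_apply_zero (a : ℝ → ℝ) : cum a 0 = 0 :=
  intervalIntegral.integral_same

@[simp]
lemma cum_fun_zero (t : ℝ) : cum (fun _ => 0) t = 0 := by
  simp [cum]

lemma Measurable.intervalIntegrable_of_mem_Icc {M : ℝ} (ha : Measurable a)
    (hbd : ∀ t ∈ Icc 0 T, a t ∈ Icc 0 M) (hT : 0 ≤ T) : IntervalIntegrable a volume 0 T := by
  refine (intervalIntegrable_const (c := M)).mono_fun' ha.aestronglyMeasurable.restrict ?_
  refine ae_restrict_of_forall_mem measurableSet_uIoc fun t ht => ?_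
  rw [uIoc_of_le hT] at ht
  have := hbd t (Ioc_subset_Icc_self ht)
  simpa [abs_of_nonneg this.1] using this.2

lemma absolutelyContinuousOnInterval_cum (ha : IntervalIntegrable a volume 0 T) :
    AbsolutelyContinuousOnInterval (cum a) 0 T :=
  ha.absolutelyContinuousOnInterval_intervalIntegral left_mem_uIcc

lemma ae_hasDerivAt_cum (ha : IntervalIntegrable a volume 0 T) :
    ∀ᵐ t, t ∈ uIcc 0 T → HasDerivAt (cum a) (a t) t := by
  filter_upwards [ha.ae_hasDerivAt_integral] with t ht htT using ht htT 0 left_mem_uIcc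

lemma monotoneOn_cum (ha : IntervalIntegrable a volume 0 T) (ha0 : ∀ t ∈ Icc 0 T, 0 ≤ a t) :
    MonotoneOn (cum a) (Icc 0 T) := by
  intro u hu v hv huv
  have hint : ∀ w ∈ Icc 0 T, IntervalIntegrable a volume 0 w := fun w hw =>
    ha.mono_set (uIcc_subset_uIcc_left (by rwa [uIcc_of_le (hw.1.trans hw.2)]))
  have hsub := intervalIntegral.integral_interval_sub_left (hint v hv) (hint u hu)
  have : 0 ≤ ∫ s in u..v, a s :=
    intervalIntegral.integral_nonneg huv fun s hs => ha0 s ⟨hu.1.trans hs.1, hs.2.trans hv.2⟩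
  simp only [cum]
  linarith

lemma cum_nonneg (ha : IntervalIntegrable a volume 0 T) (ha0 : ∀ t ∈ Icc 0 T, 0 ≤ a t)
    {t : ℝ} (ht : t ∈ Icc 0 T) : 0 ≤ cum a t := by
  simpa using monotoneOn_cum ha ha0 ⟨le_rfl, ht.1.trans ht.2⟩ ht ht.1

lemma cum_le_mul {M : ℝ} (ha : IntervalIntegrable a volume 0 T) (haM : ∀ t ∈ Icc 0 T, a t ≤ M)
    {t : ℝ} (ht : t ∈ Icc 0 T) : cum a t ≤ M * t := by
  have hle := intervalIntegral.integral_mono_on ht.1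
    (ha.mono_set (uIcc_subset_uIcc_left (by rwa [uIcc_of_le (ht.1.trans ht.2)])))
    intervalIntegrable_const fun s hs => haM s ⟨hs.1, hs.2.trans ht.2⟩
  simpa [cum, mul_comm] using hle

lemma cum_threshold {β ψ t : ℝ} (hψ : 0 ≤ ψ) (ht : 0 ≤ t) :
    cum (threshold β ψ) t = β * min t ψ := by
  rcases le_total t ψ with htψ | hψt
  · have hβ : EqOn (threshold β ψ) (fun _ => β) (uIcc 0 t) := by
      intro s hs
      rw [uIcc_of_le ht] at hs
      simp [threshold, hs.1, hs.2.trans htψ]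
    simp [cum, intervalIntegral.integral_congr hβ, min_eq_left htψ, mul_comm]
  · have hind : EqOn (threshold β ψ) ({x | x ≤ ψ}.indicator fun _ => β) (uIcc 0 t) := by
      intro s hs
      rw [uIcc_of_le ht] at hs
      simp [threshold, indicator, hs.1]
    simp [cum, intervalIntegral.integral_congr hind, intervalIntegral.integral_indicator ⟨hψ, hψt⟩,
      min_eq_right hψt, mul_comm]

end Cumulative

lemma measurable_threshold (β ψ : ℝ) : Measurable (threshold β ψ) :=
  Measurable.ite measurableSet_Icc measurable_const measurable_const

lemma threshold_mem_Icc {β : ℝ} (hβ : 0 ≤ β) (ψ t : ℝ) : threshold β ψ t ∈ Icc 0 β := by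
  unfold threshold
  split_ifs <;> simp [hβ]

lemma integral_mul_exp_neg_mul_sub (c β T u v : ℝ) :
    ∫ τ in u..v, c * β * exp (-(β * (T - τ)))
      = c * (exp (-(β * (T - v))) - exp (-(β * (T - u)))) := by
  rw [intervalIntegral.integral_eq_sub_of_hasDerivAt (f := fun τ => c * exp (-(β * (T - τ))))
    (fun t _ => ?_) (Continuous.intervalIntegrable (by fun_prop) u v)]
  · ring
  exact ((((hasDerivAt_id t).const_sub T).const_mul β).neg.exp.const_mul c).congr_deriv
    (by simp only [id, Pi.neg_apply]; ring)

lemma integral_mul_sub_le_of_threshold {m P Q : ℝ → ℝ} {T ν ψ : ℝ} (hψ : ψ ∈ Icc 0 T)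
    (hm : Continuous m) (hm0 : ∀ t ∈ Icc 0 T, 0 ≤ m t) (hmν : ∫ t in ψ..T, m t = ν)
    (hP : ContinuousOn P (Icc 0 T)) (hQ : ContinuousOn Q (Icc 0 T))
    (hPT : ∀ t ∈ Icc ψ T, P t ≤ P T) (hPQ : ∀ t ∈ Icc 0 ψ, P t ≤ Q t)
    (hQT : ∀ t ∈ Icc ψ T, Q t = Q T) :
    (∫ t in 0..T, m t * P t) - ν * P T ≤ (∫ t in 0..T, m t * Q t) - ν * Q T := by
  have hint : ∀ R : ℝ → ℝ, ContinuousOn R (Icc 0 T) → ∀ u ∈ Icc 0 T, ∀ v ∈ Icc 0 T,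
      IntervalIntegrable (fun t => m t * R t) volume u v := fun R hR u hu v hv =>
    ContinuousOn.intervalIntegrable ((hm.continuousOn.mul hR).mono
      (uIcc_subset_Icc hu hv))
  have hsplit : ∀ R : ℝ → ℝ, ContinuousOn R (Icc 0 T) → (∫ t in 0..T, m t * R t) - ν * R T
      = (∫ t in 0..ψ, m t * R t) - ∫ t in ψ..T, m t * (R T - R t) := by
    intro R hR
    have h0 : (0 : ℝ) ∈ Icc 0 T := ⟨le_rfl, hψ.1.trans hψ.2⟩
    have hT : T ∈ Icc 0 T := ⟨h0.2, le_rfl⟩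
    rw [← intervalIntegral.integral_add_adjacent_intervals (hint R hR 0 h0 ψ hψ)
      (hint R hR ψ hψ T hT), ← hmν, ← intervalIntegral.integral_mul_const, add_sub_assoc,
      ← intervalIntegral.integral_sub (hint R hR ψ hψ T hT)
        ((hm.intervalIntegrable ψ T).mul_const _),
      sub_eq_add_neg, ← intervalIntegral.integral_neg]
    simp only [mul_sub, neg_sub]
  have hPψT : 0 ≤ ∫ t in ψ..T, m t * (P T - P t) :=
    intervalIntegral.integral_nonneg hψ.2 fun t ht =>
      mul_nonneg (hm0 t ⟨hψ.1.trans ht.1, ht.2⟩) (sub_nonneg.2 (hPT t ht))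
  have hQψT : ∫ t in ψ..T, m t * (Q T - Q t) = 0 := by
    refine (intervalIntegral.integral_congr fun t ht => ?_).trans intervalIntegral.integral_zero
    rw [uIcc_of_le hψ.2] at ht
    simp [hQT t ht]
  have h0ψ : ∫ t in 0..ψ, m t * P t ≤ ∫ t in 0..ψ, m t * Q t :=
    intervalIntegral.integral_mono_on hψ.1 (hint P hP 0 ⟨le_rfl, hψ.1.trans hψ.2⟩ ψ hψ)
      (hint Q hQ 0 ⟨le_rfl, hψ.1.trans hψ.2⟩ ψ hψ) fun t ht =>
      mul_le_mul_of_nonneg_left (hPQ t ht) (hm0 t ⟨ht.1, ht.2.trans hψ.2⟩)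
  rw [hsplit P hP, hsplit Q hQ]
  linarith

section Payoff

variable {T ν β : ℝ} {a b : ℝ → ℝ}

@[simp]
lemma twoLockPayoff_silent : twoLockPayoff T ν β (fun _ => 0) b = 0 := by
  simp [twoLockPayoff]

lemma twoLockPayoff_nonpos (hT : 0 ≤ T) (hβ : 0 ≤ β) (hν : ν ≤ 1)
    (hcoef : (1 - ν) * (1 - exp (-(β * T))) ≤ ν)
    (ha : IntervalIntegrable a volume 0 T) (ha0 : ∀ t ∈ Icc 0 T, 0 ≤ a t)
    (hb : IntervalIntegrable b volume 0 T) (hb0 : ∀ t ∈ Icc 0 T, 0 ≤ b t) :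
    twoLockPayoff T ν β a b ≤ 0 := by
  have hAac := absolutelyContinuousOnInterval_cum ha
  have hA := hAac.continuousOn
  have hB := (absolutelyContinuousOnInterval_cum hb).continuousOn
  have hftc : ∫ τ in 0..T, ν * ((1 - cum a τ) * exp (-cum a τ) * a τ)
      = ν * (cum a T * exp (-cum a T)) := by
    have hφ : ContDiff ℝ 1 fun x : ℝ => x * exp (-x) := by fun_prop
    have hac := (hφ.locallyLipschitz.comp_absolutelyContinuousOnInterval hAac).const_mul ν
    rw [hac.integral_eq_sub_of_ae_hasDerivAt, cum_apply_zero, zero_mul, mul_zero, sub_zero]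
    filter_upwards [ae_hasDerivAt_cum ha] with t ht htT
    exact (((ht htT).mul (ht htT).neg.exp).const_mul ν).congr_deriv
      (by simp only [Pi.neg_apply]; ring)
  have hcoef_le : ∀ τ ∈ Icc 0 T,
      (1 - ν) * (1 - exp (-(β * (T - τ)))) * exp (-cum b τ) ≤ ν := fun τ hτ =>
    calc (1 - ν) * (1 - exp (-(β * (T - τ)))) * exp (-cum b τ)
        ≤ (1 - ν) * (1 - exp (-(β * (T - τ)))) :=
          mul_le_of_le_one_right (mul_nonneg (by linarith)
            (by simp [mul_nonneg hβ (sub_nonneg.2 hτ.2)]))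
            (exp_le_one_iff.2 (by linarith [cum_nonneg hb hb0 hτ]))
      _ ≤ (1 - ν) * (1 - exp (-(β * T))) := by
          gcongr
          linarith [hτ.1]
      _ ≤ ν := hcoef
  have hint : IntervalIntegrable (fun τ => ((1 - ν) * (1 - exp (-(β * (T - τ)))) *
      exp (-cum b τ) - ν * cum a τ) * exp (-cum a τ) * a τ) volume 0 T :=
    ha.continuousOn_mul (by fun_prop)
  have hint' : IntervalIntegrable (fun τ => ν * ((1 - cum a τ) * exp (-cum a τ) * a τ))
      volume 0 T := by
    simpa only [mul_assoc] using ha.continuousOn_mul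
      (g := fun τ => ν * ((1 - cum a τ) * exp (-cum a τ))) (by fun_prop)
  have hle := intervalIntegral.integral_mono_on hT hint hint' fun τ hτ => by
      have := mul_le_mul_of_nonneg_right (sub_le_sub_right (hcoef_le τ hτ) (ν * cum a τ))
        (mul_nonneg (exp_nonneg (-cum a τ)) (ha0 τ hτ))
      linarith
  unfold twoLockPayoff
  linarith

lemma twoLockPayoff_against_silent (hb : IntervalIntegrable b volume 0 T) :
    twoLockPayoff T ν β b (fun _ => 0)
      = (∫ τ in 0..T, (1 - ν) * β * exp (-(β * (T - τ))) * (1 - exp (-cum b τ)))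
        - ν * (1 - exp (-cum b T)) := by
  have hBac := absolutelyContinuousOnInterval_cum hb
  have hB := hBac.continuousOn
  have hint : IntervalIntegrable (fun τ => ((1 - ν) * (1 - exp (-(β * (T - τ))))
      - ν * cum b τ) * exp (-cum b τ) * b τ) volume 0 T :=
    hb.continuousOn_mul (by fun_prop)
  have hint' : IntervalIntegrable
      (fun τ => (1 - ν) * β * exp (-(β * (T - τ))) * (1 - exp (-cum b τ))) volume 0 T :=
    ContinuousOn.intervalIntegrable (by fun_prop)
  -- Integration by parts against the second-stage value, together with
  -- `-ν B e^{-B} b = ν ((1 + B) e^{-B})'`.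
  have hac : AbsolutelyContinuousOnInterval (fun τ => (1 - ν) * (1 - exp (-(β * (T - τ))))
      * (1 - exp (-cum b τ)) + ν * ((1 + cum b τ) * exp (-cum b τ))) 0 T := by
    have hV : ContDiff ℝ 1 fun τ : ℝ => (1 - ν) * (1 - exp (-(β * (T - τ)))) := by fun_prop
    have hP : ContDiff ℝ 1 fun x : ℝ => 1 - exp (-x) := by fun_prop
    have hQ : ContDiff ℝ 1 fun x : ℝ => (1 + x) * exp (-x) := by fun_prop
    exact (hV.contDiffOn.absolutelyContinuousOnInterval.fun_mul
      (hP.locallyLipschitz.comp_absolutelyContinuousOnInterval hBac)).fun_add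
      ((hQ.locallyLipschitz.comp_absolutelyContinuousOnInterval hBac).const_mul ν)
  have hftc := hac.integral_eq_sub_of_ae_hasDerivAt (f' := fun τ => ((1 - ν) *
      (1 - exp (-(β * (T - τ)))) - ν * cum b τ) * exp (-cum b τ) * b τ
      - (1 - ν) * β * exp (-(β * (T - τ))) * (1 - exp (-cum b τ))) ?_
  · rw [intervalIntegral.integral_sub hint hint'] at hftc
    simp only [twoLockPayoff, cum_fun_zero, cum_apply_zero, neg_zero, exp_zero, mul_one, sub_self,
      mul_zero, zero_mul, add_zero] at hftc ⊢
    linarith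
  filter_upwards [ae_hasDerivAt_cum hb] with t ht htT
  have hV : HasDerivAt (fun τ => (1 - ν) * (1 - exp (-(β * (T - τ)))))
      (-((1 - ν) * β * exp (-(β * (T - t))))) t := by
    have := ((((hasDerivAt_id t).const_sub T).const_mul β).neg.exp.const_sub 1).const_mul (1 - ν)
    exact this.congr_deriv (by simp only [id, Pi.neg_apply]; ring)
  have hBt := ht htT
  exact ((hV.mul (hBt.neg.exp.const_sub 1)).add
    (((hBt.const_add 1).mul hBt.neg.exp).const_mul ν)).congr_deriv
    (by simp only [Pi.neg_apply]; ring)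

end Payoff

lemma twoLockPayoff_le_threshold_against_silent {T ν β ψ : ℝ} {b : ℝ → ℝ} (hψ : ψ ∈ Icc 0 T)
    (hβ : 0 ≤ β) (hν : ν ≤ 1) (hψν : (1 - ν) * (1 - exp (-(β * (T - ψ)))) = ν)
    (hb : Measurable b) (hadm : ∀ t ∈ Icc 0 T, b t ∈ Icc 0 β) :
    twoLockPayoff T ν β b (fun _ => 0) ≤ twoLockPayoff T ν β (threshold β ψ) (fun _ => 0) := by
  have hT : 0 ≤ T := hψ.1.trans hψ.2
  have hbi := hb.intervalIntegrable_of_mem_Icc hadm hT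
  have hb'i := (measurable_threshold β ψ).intervalIntegrable_of_mem_Icc
    (fun t _ => threshold_mem_Icc hβ ψ t) hT
  have hB := (absolutelyContinuousOnInterval_cum hbi).continuousOn
  have hB' := (absolutelyContinuousOnInterval_cum hb'i).continuousOn
  rw [uIcc_of_le hT] at hB hB'
  have hcum' : ∀ t ∈ Icc 0 T, cum (threshold β ψ) t = β * min t ψ := fun t ht =>
    cum_threshold hψ.1 ht.1
  rw [twoLockPayoff_against_silent hbi, twoLockPayoff_against_silent hb'i]
  refine integral_mul_sub_le_of_threshold hψ (m := fun τ => (1 - ν) * β * exp (-(β * (T - τ))))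
    (P := fun τ => 1 - exp (-cum b τ)) (Q := fun τ => 1 - exp (-cum (threshold β ψ) τ))
    (by fun_prop) (fun t _ => mul_nonneg (mul_nonneg (by linarith) hβ) (exp_nonneg _))
    (by rw [integral_mul_exp_neg_mul_sub]; simpa using hψν) (by fun_prop) (by fun_prop)
    (fun t ht => ?_) (fun t ht => ?_) (fun t ht => ?_)
  · have hmono := monotoneOn_cum hbi (fun s hs => (hadm s hs).1) ⟨hψ.1.trans ht.1, ht.2⟩
      ⟨hT, le_rfl⟩ ht.2
    gcongr
  · have hle := cum_le_mul hbi (fun s hs => (hadm s hs).2) ⟨ht.1, ht.2.trans hψ.2⟩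
    rw [hcum' t ⟨ht.1, ht.2.trans hψ.2⟩, min_eq_left ht.2]
    gcongr
  · rw [hcum' t ⟨hψ.1.trans ht.1, ht.2⟩, hcum' T ⟨hT, le_rfl⟩, min_eq_right ht.1,
      min_eq_right hψ.2]

lemma one_sub_mul_one_sub_div {ν : ℝ} (hν : ν < 1) :
    (1 - ν) * (1 - (1 - 2 * ν) / (1 - ν)) = ν := by
  have : 1 - ν ≠ 0 := by linarith
  field_simp
  ring

theorem two_lock_NE_i_silent_j_threshold_general
    (T ν βi βj : ℝ) (hT : 0 < T) (hν0 : 0 < ν) (hν1 : ν < 1/2)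
    (hβi : 0 < βi)
    (hcase1 : Real.exp (-(βi * T)) > (1 - 2*ν) / (1 - ν))
    (hcase2 : (1 - 2*ν) / (1 - ν) > Real.exp (-(βj * T))) :
    0 < T + Real.log ((1 - 2*ν) / (1 - ν)) / βj ∧
    T + Real.log ((1 - 2*ν) / (1 - ν)) / βj < T ∧
    (∀ a : ℝ → ℝ, Measurable a → (∀ t ∈ Icc (0:ℝ) T, a t ∈ Icc (0:ℝ) βi) →
        twoLockPayoff T ν βi a
            (threshold βj (T + Real.log ((1 - 2*ν) / (1 - ν)) / βj))
          ≤ twoLockPayoff T ν βi (fun _ => 0)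
              (threshold βj (T + Real.log ((1 - 2*ν) / (1 - ν)) / βj))) ∧
    (∀ b : ℝ → ℝ, Measurable b → (∀ t ∈ Icc (0:ℝ) T, b t ∈ Icc (0:ℝ) βj) →
        twoLockPayoff T ν βj b (fun _ => 0)
          ≤ twoLockPayoff T ν βj
              (threshold βj (T + Real.log ((1 - 2*ν) / (1 - ν)) / βj))
              (fun _ => 0)) := by
  set c := (1 - 2 * ν) / (1 - ν)
  set ψ := T + Real.log c / βj
  have hc0 : 0 < c := div_pos (by linarith) (by linarith)
  have hc1 : c < 1 := (div_lt_one (by linarith)).2 (by linarith)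
  have hβj : 0 < βj := by
    have : -(βj * T) < 0 := exp_lt_one_iff.1 (hcase2.trans hc1)
    nlinarith
  have hψ0 : 0 < ψ := by
    have : -T < log c / βj := by
      rw [lt_div_iff₀ hβj, neg_mul, mul_comm]
      exact (lt_log_iff_exp_lt hc0).2 hcase2
    linarith
  have hψT : ψ < T := add_lt_of_neg_right T (div_neg_of_neg_of_pos (log_neg hc0 hc1) hβj)
  have hexp : exp (-(βj * (T - ψ))) = c := by
    rw [show -(βj * (T - ψ)) = log c by simp only [ψ]; field_simp; ring, exp_log hc0]
  refine ⟨hψ0, hψT, fun a ha hadm => ?_, fun b hb hadm =>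
    twoLockPayoff_le_threshold_against_silent ⟨hψ0.le, hψT.le⟩ hβj.le (by linarith)
      (by rw [hexp]; exact one_sub_mul_one_sub_div (by linarith)) hb hadm⟩
  rw [twoLockPayoff_silent]
  refine twoLockPayoff_nonpos hT.le hβi.le (by linarith) ?_
    (ha.intervalIntegrable_of_mem_Icc hadm hT.le) (fun t ht => (hadm t ht).1)
    ((measurable_threshold βj ψ).intervalIntegrable_of_mem_Icc
      (fun t _ => threshold_mem_Icc hβj.le ψ t) hT.le)
    (fun t _ => (threshold_mem_Icc hβj.le ψ t).1)
  calc (1 - ν) * (1 - exp (-(βi * T))) ≤ (1 - ν) * (1 - c) := by gcongr; linarith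
    _ = ν := one_sub_mul_one_sub_div (by linarith)

/-- Paper's Theorem 4, second case: if `0 < ν < 1/2`, `βʲ ≥ βⁱ` and
`e^{−βⁱT} > (1−2ν)/(1−ν) > e^{−βʲT}`, then with
`ψ₀ = T + (1/βʲ) ln((1−2ν)/(1−ν))` one has `ψ₀ ∈ (0,T)` and the pair
`(0, Γ_{βʲ}(ψ₀))` is a Nash equilibrium of the reduced two-lock game. -/
theorem two_lock_NE_i_silent_j_threshold
    (T ν βi βj : ℝ) (hT : 0 < T) (hν0 : 0 < ν) (hν1 : ν < 1/2)
    (hβi : 0 < βi) (hβij : βi ≤ βj)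
    (hcase1 : Real.exp (-(βi * T)) > (1 - 2*ν) / (1 - ν))
    (hcase2 : (1 - 2*ν) / (1 - ν) > Real.exp (-(βj * T))) :
    0 < T + Real.log ((1 - 2*ν) / (1 - ν)) / βj ∧
    T + Real.log ((1 - 2*ν) / (1 - ν)) / βj < T ∧
    (∀ a : ℝ → ℝ, Measurable a → (∀ t ∈ Icc (0:ℝ) T, a t ∈ Icc (0:ℝ) βi) →
        twoLockPayoff T ν βi a
            (threshold βj (T + Real.log ((1 - 2*ν) / (1 - ν)) / βj))
          ≤ twoLockPayoff T ν βi (fun _ => 0)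
              (threshold βj (T + Real.log ((1 - 2*ν) / (1 - ν)) / βj))) ∧
    (∀ b : ℝ → ℝ, Measurable b → (∀ t ∈ Icc (0:ℝ) T, b t ∈ Icc (0:ℝ) βj) →
        twoLockPayoff T ν βj b (fun _ => 0)
          ≤ twoLockPayoff T ν βj
              (threshold βj (T + Real.log ((1 - 2*ν) / (1 - ν)) / βj))
              (fun _ => 0)) :=
  two_lock_NE_i_silent_j_threshold_general T ν βi βj hT hν0 hν1 hβi hcase1 hcase2
end

section
/- For every T > 0, β₁ > 0, β₂ > 0 and ν ∈ (0, 1/2), there exists ψ ∈ [0, T) such that e^{−β₂ψ} = min{ 1, e^{−β₁(T−ψ) − β₂ψ} + ν/(1−ν) }. (Existence, used implicitly in the paper's Theorem 4, of the equilibrium thresholds ψⁱ* and ψʲ* — taking (β₁,β₂) = (βⁱ,βʲ) for agent i's threshold and (β₁,β₂) = (βʲ,βⁱ) for agent j's threshold — and of the asserted bound ψⁱ*, ψʲ* < T.) -/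
open Real Set

/-! At `ψ = 0` the left side is `1`, which dominates the minimum. At `ψ = T` the exponential
inside the minimum collapses to the left side `e^{−β₂T} < 1`, so both arguments of the minimum
strictly exceed the left side, the second by `ν/(1−ν) > 0`. The intermediate value theorem gives a
crossing, and the strict inequality at `T` keeps it inside `[0, T)`. -/

theorem exists_mem_Ico_eq_of_le_of_lt {f g : ℝ → ℝ} {a b : ℝ} (hab : a ≤ b)
    (hf : ContinuousOn f (Icc a b)) (hg : ContinuousOn g (Icc a b))
    (ha : g a ≤ f a) (hb : f b < g b) : ∃ x ∈ Ico a b, f x = g x := by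
  have hzero : (0 : ℝ) ∈ Ico ((g - f) a) ((g - f) b) := by
    simp only [Pi.sub_apply, mem_Ico]
    constructor <;> linarith
  obtain ⟨x, hx, hgf⟩ := intermediate_value_Ico hab (hg.sub hf) hzero
  exact ⟨x, hx, (sub_eq_zero.mp hgf).symm⟩

theorem exists_equilibrium_threshold_general
    (T β₁ β₂ ν : ℝ) (hT : 0 < T) (hβ₂ : 0 < β₂)
    (hν0 : 0 < ν) (hν1 : ν < 1/2) :
    ∃ ψ ∈ Ico (0:ℝ) T,
      Real.exp (-(β₂ * ψ))
        = min 1 (Real.exp (-(β₁ * (T - ψ)) - β₂ * ψ) + ν / (1 - ν)) := by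
  have hc : 0 < ν / (1 - ν) := div_pos hν0 (by linarith)
  have hexpT : Real.exp (-(β₂ * T)) < 1 :=
    Real.exp_lt_one_iff.mpr (neg_neg_of_pos (mul_pos hβ₂ hT))
  refine exists_mem_Ico_eq_of_le_of_lt hT.le (by fun_prop) (by fun_prop) ?_ ?_
  · simp
  · refine lt_min hexpT ?_
    rw [sub_self, mul_zero, neg_zero, zero_sub]
    linarith

/-- Existence (used implicitly in the paper's Theorem 4) of an equilibrium
time threshold `ψ ∈ [0,T)` solving the fixed-point equation
`e^{−β₂ψ} = min{1, e^{−β₁(T−ψ) − β₂ψ} + ν/(1−ν)}`. -/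
theorem exists_equilibrium_threshold
    (T β₁ β₂ ν : ℝ) (hT : 0 < T) (hβ₁ : 0 < β₁) (hβ₂ : 0 < β₂)
    (hν0 : 0 < ν) (hν1 : ν < 1/2) :
    ∃ ψ ∈ Ico (0:ℝ) T,
      Real.exp (-(β₂ * ψ))
        = min 1 (Real.exp (-(β₁ * (T - ψ)) - β₂ * ψ) + ν / (1 - ν)) :=
  exists_equilibrium_threshold_general T β₁ β₂ ν hT hβ₂ hν0 hν1
end
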